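/- Let E ⊆ 𝕋 be an open subset of the circle written as an at most countable union of pairwise disjoint open arcs I_k with arc lengths l_k. Then for every h > 0, τ(h,E) ≤ 2·Σ_{k : l_k ≥ h} h + 2·Σ_{k : l_k < h} l_k, where the first sum is h times the number of arcs of length at least h. -/

import Mathlib

open MeasureTheory Set

/-- `τ(h,E)`: the measure of the set where the characteristic function of `E`
translated by `h` differs from itself. -/
noncomputable def tau (h : ℝ) (E : Set (AddCircle (1:ℝ))) : ℝ :=
  (volume {x : AddCircle (1:ℝ) |
    E.indicator (fun _ => (1:ℝ)) (x + ((h : ℝ) : AddCircle (1:ℝ)))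
      ≠ E.indicator (fun _ => (1:ℝ)) x}).toReal

/-- The open arc of the circle which is the image of the interval `(a, a+l)`. -/
noncomputable def arc (a l : ℝ) : Set (AddCircle (1:ℝ)) :=
  (fun r : ℝ => (r : AddCircle (1:ℝ))) '' Set.Ioo a (a + l)

/-!
Translating `E` by `h` moves each arc `I = (a, a + l)` by `h`, and `I ∆ (I - h)` is covered
both by the two arcs themselves and by the two end pieces `[a - h, a]`, `[a + l - h, a + l]`,
so it has measure at most `2 min(h, l)`. Since `E ∆ (E - h)` is covered by these per-arc
symmetric differences, `τ(h, E) ≤ Σ_k 2 min(h, l_k)`; disjointness of the arcs makes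
`Σ_k l_k ≤ 1`, so this sum converges and splits into the long and the short arcs.
-/

open scoped ENNReal symmDiff

section Arcs

local notation "𝕋" => AddCircle (1 : ℝ)

lemma measurableSet_arc (a l : ℝ) : MeasurableSet (arc a l) :=
  (QuotientAddGroup.isOpenMap_coe _ isOpen_Ioo).measurableSet

lemma volume_coe_image_Icc_le (a b : ℝ) :
    volume (((↑) : ℝ → 𝕋) '' Icc a b) ≤ ENNReal.ofReal (b - a) := by
  have hsub : ((↑) : ℝ → 𝕋) '' Icc a b ⊆
      Metric.closedBall (((a + b) / 2 : ℝ) : 𝕋) ((b - a) / 2) := by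
    rintro _ ⟨r, hr, rfl⟩
    rw [Metric.mem_closedBall, dist_eq_norm, ← AddCircle.coe_sub]
    refine QuotientAddGroup.norm_mk_le_norm.trans ?_
    rw [Real.norm_eq_abs, abs_le]
    constructor <;> linarith [hr.1, hr.2]
  calc volume (((↑) : ℝ → 𝕋) '' Icc a b)
      ≤ volume (Metric.closedBall (((a + b) / 2 : ℝ) : 𝕋) ((b - a) / 2)) := measure_mono hsub
    _ = ENNReal.ofReal (min 1 (2 * ((b - a) / 2))) := AddCircle.volume_closedBall _ _
    _ ≤ ENNReal.ofReal (b - a) :=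
      ENNReal.ofReal_le_ofReal (by linarith [min_le_right 1 (2 * ((b - a) / 2))])

lemma volume_arc_le (a l : ℝ) : volume (arc a l) ≤ ENNReal.ofReal l := by
  simpa [arc] using (measure_mono (image_mono Ioo_subset_Icc_self)).trans
    (volume_coe_image_Icc_le a (a + l))

lemma ofReal_le_volume_arc (a : ℝ) {l : ℝ} (hl : l ≤ 1) :
    ENNReal.ofReal l ≤ volume (arc a l) :=
  calc ENNReal.ofReal l = volume (Ioo a (a + l)) := by simp [Real.volume_Ioo]
    _ ≤ volume (((↑) : ℝ → 𝕋) ⁻¹' arc a l ∩ Ioc a (a + 1)) :=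
      measure_mono fun x hx => ⟨mem_image_of_mem _ hx, hx.1, by linarith [hx.2]⟩
    _ = volume (arc a l) :=
      (AddCircle.add_projection_respects_measure 1 a (measurableSet_arc a l)).symm

lemma preimage_add_arc (a l h : ℝ) : (· + (h : 𝕋)) ⁻¹' arc a l = arc (a - h) l := by
  ext x
  constructor
  · rintro ⟨r, hr, hrx⟩
    refine ⟨r - h, ⟨by linarith [hr.1], by linarith [hr.2]⟩, ?_⟩
    change ((r - h : ℝ) : 𝕋) = x
    rw [AddCircle.coe_sub, show (r : 𝕋) = x + h from hrx, add_sub_cancel_right]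
  · rintro ⟨r, hr, rfl⟩
    exact ⟨r + h, ⟨by linarith [hr.1], by linarith [hr.2]⟩, AddCircle.coe_add _ r h⟩

lemma symmDiff_arc_sub_subset (a : ℝ) {h : ℝ} (hh : 0 ≤ h) (l : ℝ) :
    arc (a - h) l ∆ arc a l ⊆
      ((↑) : ℝ → 𝕋) '' Icc (a - h) a ∪ ((↑) : ℝ → 𝕋) '' Icc (a + l - h) (a + l) := by
  rintro _ (⟨⟨r, hr, rfl⟩, hnot⟩ | ⟨⟨r, hr, rfl⟩, hnot⟩)
  · refine Or.inl ⟨r, ⟨hr.1.le, le_of_not_gt fun hra => hnot ?_⟩, rfl⟩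
    exact ⟨r, ⟨hra, by linarith [hr.2]⟩, rfl⟩
  · refine Or.inr ⟨r, ⟨le_of_not_gt fun hrl => hnot ?_, hr.2.le⟩, rfl⟩
    exact ⟨r, ⟨by linarith [hr.1], by linarith⟩, rfl⟩

lemma volume_symmDiff_arc_sub_le (a : ℝ) {h : ℝ} (hh : 0 ≤ h) (l : ℝ) :
    volume (arc (a - h) l ∆ arc a l) ≤ 2 * ENNReal.ofReal (min h l) := by
  rw [ENNReal.ofReal_min, mul_min]
  refine le_min ?_ ?_
  · calc volume (arc (a - h) l ∆ arc a l)
        ≤ volume (((↑) : ℝ → 𝕋) '' Icc (a - h) a ∪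
            ((↑) : ℝ → 𝕋) '' Icc (a + l - h) (a + l)) :=
          measure_mono (symmDiff_arc_sub_subset a hh l)
      _ ≤ ENNReal.ofReal h + ENNReal.ofReal h := by
          refine (measure_union_le _ _).trans (add_le_add ?_ ?_)
          · simpa using volume_coe_image_Icc_le (a - h) a
          · simpa using volume_coe_image_Icc_le (a + l - h) (a + l)
      _ = 2 * ENNReal.ofReal h := (two_mul _).symm
  · calc volume (arc (a - h) l ∆ arc a l) ≤ volume (arc (a - h) l ∪ arc a l) :=
          measure_mono symmDiff_subset_union
      _ ≤ ENNReal.ofReal l + ENNReal.ofReal l :=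
          (measure_union_le _ _).trans (add_le_add (volume_arc_le _ _) (volume_arc_le _ _))
      _ = 2 * ENNReal.ofReal l := (two_mul _).symm

lemma tau_eq_volume_symmDiff (h : ℝ) (E : Set 𝕋) :
    tau h E = (volume (((· + (h : 𝕋)) ⁻¹' E) ∆ E)).toReal := by
  unfold tau
  congr 2
  ext x
  by_cases hx : x ∈ E <;> by_cases hxh : x + (h : 𝕋) ∈ E <;>
    simp [Set.mem_symmDiff, hx, hxh]

lemma summable_of_pairwise_disjoint_arc {ι : Type*} [Countable ι] {a l : ι → ℝ}
    (hl0 : ∀ k, 0 ≤ l k) (hl1 : ∀ k, l k ≤ 1)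
    (hdisj : Pairwise (Function.onFun Disjoint fun k => arc (a k) (l k))) : Summable l := by
  have hfin : ∑' k, ENNReal.ofReal (l k) ≠ ∞ := by
    refine ne_top_of_le_ne_top (measure_ne_top volume (⋃ k, arc (a k) (l k))) ?_
    rw [measure_iUnion hdisj fun k => measurableSet_arc _ _]
    exact ENNReal.tsum_le_tsum fun k => ofReal_le_volume_arc _ (hl1 k)
  simpa [hl0] using ENNReal.summable_toReal hfin

lemma tau_iUnion_arc_le {ι : Type*} [Countable ι] (a l : ι → ℝ) {h : ℝ} (hh : 0 ≤ h)
    (hl0 : ∀ k, 0 ≤ l k) (hsum : Summable fun k => min h (l k)) :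
    tau h (⋃ k, arc (a k) (l k)) ≤ ∑' k, 2 * min h (l k) := by
  have hnonneg : ∀ k, 0 ≤ 2 * min h (l k) := fun k =>
    mul_nonneg zero_le_two (le_min hh (hl0 k))
  rw [tau_eq_volume_symmDiff]
  refine ENNReal.toReal_le_of_le_ofReal (tsum_nonneg hnonneg) ?_
  calc volume (((· + (h : 𝕋)) ⁻¹' ⋃ k, arc (a k) (l k)) ∆ ⋃ k, arc (a k) (l k))
      ≤ volume (⋃ k, arc (a k - h) (l k) ∆ arc (a k) (l k)) := by
        simp only [preimage_iUnion, preimage_add_arc]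
        exact measure_mono iUnion_symmDiff_iUnion_subset
    _ ≤ ∑' k, volume (arc (a k - h) (l k) ∆ arc (a k) (l k)) := measure_iUnion_le _
    _ ≤ ∑' k, ENNReal.ofReal (2 * min h (l k)) := ENNReal.tsum_le_tsum fun k => by
        rw [ENNReal.ofReal_mul zero_le_two, ENNReal.ofReal_ofNat]
        exact volume_symmDiff_arc_sub_le _ hh _
    _ = ENNReal.ofReal (∑' k, 2 * min h (l k)) :=
        (ENNReal.ofReal_tsum_of_nonneg hnonneg (hsum.mul_left 2)).symm

end Arcs

lemma tsum_min_eq {ι : Type*} {f : ι → ℝ} (c : ℝ) (hf : Summable fun k => min c (f k)) :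
    ∑' k, min c (f k) = ∑' _k : {k // c ≤ f k}, c + ∑' k : {k // f k < c}, f k := by
  rw [← hf.tsum_subtype_add_tsum_subtype_compl {k | c ≤ f k}]
  congr 1
  · exact tsum_congr fun k => min_eq_left k.2
  · rw [← (Equiv.subtypeEquivRight fun k => not_le).tsum_eq]
    exact tsum_congr fun k => min_eq_right (not_le.mp (show ¬c ≤ f k from k.2)).le

/-- If `E ⊆ 𝕋` is an at most countable union of pairwise disjoint open
arcs of lengths `l k`, then for every `h > 0`,
`τ(h,E) ≤ 2·Σ_{l_k ≥ h} h + 2·Σ_{l_k < h} l_k`. -/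
theorem stmt_8 {ι : Type} [Countable ι] (a l : ι → ℝ) (E : Set (AddCircle (1:ℝ)))
    (hE : E = ⋃ k, arc (a k) (l k))
    (hlen : ∀ k, l k ∈ Set.Ioc (0:ℝ) 1)
    (hdisj : Pairwise (Function.onFun Disjoint (fun k => arc (a k) (l k))))
    (h : ℝ) (hh : 0 < h) :
    tau h E ≤ 2 * (∑' _k : {k : ι // h ≤ l k}, h)
      + 2 * (∑' k : {k : ι // l k < h}, l k.1) := by
  subst hE
  have hl0 : ∀ k, 0 ≤ l k := fun k => (hlen k).1.le
  have hsum : Summable fun k => min h (l k) :=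
    (summable_of_pairwise_disjoint_arc hl0 (fun k => (hlen k).2) hdisj).of_nonneg_of_le
      (fun k => le_min hh.le (hl0 k)) fun k => min_le_right _ _
  calc tau h (⋃ k, arc (a k) (l k)) ≤ ∑' k, 2 * min h (l k) :=
        tau_iUnion_arc_le a l hh.le hl0 hsum
    _ = _ := by rw [tsum_mul_left, tsum_min_eq h hsum, mul_add]
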